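/- arXiv:2408.05116 — 2 statements merged into one kernel-verified Lean document; each statement's English description precedes it below -/
import Mathlib

section
/- (Optimal shot number under a parameter-switching penalty.) Let c₁, c₂, c₃, γ, N_tot > 0 and define g(s) = c₁ √((s + γ)/N_tot) + c₂ √((s + γ)/(N_tot · s)) + c₃ √((s + γ)/N_tot) for s ∈ (0, ∞). Then g attains a unique global minimum on (0, ∞) at s* = ( c₂ γ / (c₁ + c₃) )^{2/3}; that is, g(s*) ≤ g(s) for all s > 0, with equality only at s = s*. Moreover g is strictly decreasing on (0, s*) and strictly increasing on (s*, ∞). -/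
/-!
With `A = c₁ + c₃` and `B = c₂`, `g(s) = √(s + γ) (A + B / √s) / √N_tot`, whose derivative is
`(A s^{3/2} - B γ) / (2 s^{3/2} √(s + γ) √N_tot)`. The numerator changes sign exactly once, at
`s^{3/2} = B γ / A`, i.e. at `s*`; so `g` decreases strictly up to `s*` and increases strictly after
it, which makes `s*` the unique minimiser.
-/

/-- The risk bound under a total measurement budget `N_tot` with parameter-switching
penalty `γ`: `g(s) = c₁ √((s+γ)/N_tot) + c₂ √((s+γ)/(N_tot s)) + c₃ √((s+γ)/N_tot)`. -/
noncomputable def penalizedRiskBound (c₁ c₂ c₃ γ Ntot s : ℝ) : ℝ :=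
  c₁ * Real.sqrt ((s + γ) / Ntot) + c₂ * Real.sqrt ((s + γ) / (Ntot * s))
    + c₃ * Real.sqrt ((s + γ) / Ntot)

open Real Set

theorem lt_of_strictAntiOn_Ioc_of_strictMonoOn_Ici {α β : Type*} [LinearOrder α] [Preorder β]
    {f : α → β} {a b x : α} (hanti : StrictAntiOn f (Ioc b a)) (hmono : StrictMonoOn f (Ici a))
    (hbx : b < x) (hxa : x ≠ a) : f a < f x := by
  rcases hxa.lt_or_gt with hlt | hgt
  · exact hanti ⟨hbx, hlt.le⟩ ⟨hbx.trans hlt, le_rfl⟩ hlt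
  · exact hmono self_mem_Ici hgt.le hgt

theorem strictAntiOn_Ioc_strictMonoOn_Ici_of_hasDerivAt {f f' : ℝ → ℝ} {a b : ℝ} (hba : b < a)
    (hf : ∀ x, b < x → HasDerivAt f (f' x) x) (hneg : ∀ x ∈ Ioo b a, f' x < 0)
    (hpos : ∀ x, a < x → 0 < f' x) :
    StrictAntiOn f (Ioc b a) ∧ StrictMonoOn f (Ici a) := by
  have hcont : ContinuousOn f (Ioi b) := fun x hx => (hf x hx).continuousAt.continuousWithinAt
  constructor
  · refine strictAntiOn_of_hasDerivWithinAt_neg (convex_Ioc b a)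
      (hcont.mono Ioc_subset_Ioi_self) (fun x hx => ?_) (by simpa using hneg)
    rw [interior_Ioc] at hx
    exact (hf x hx.1).hasDerivWithinAt
  · refine strictMonoOn_of_hasDerivWithinAt_pos (convex_Ici a)
      (hcont.mono (Ici_subset_Ioi.mpr hba)) (fun x hx => ?_) (by simpa using hpos)
    rw [interior_Ici] at hx
    exact (hf x (hba.trans hx)).hasDerivWithinAt

theorem mul_sqrt_lt_mul_sqrt {x y : ℝ} (hx : 0 ≤ x) (hxy : x < y) : x * √x < y * √y :=
  mul_lt_mul'' hxy (Real.sqrt_lt_sqrt hx hxy) hx (Real.sqrt_nonneg x)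

theorem rpow_two_div_three_mul_sqrt {t : ℝ} (ht : 0 ≤ t) :
    t ^ ((2 : ℝ) / 3) * √(t ^ ((2 : ℝ) / 3)) = t := by
  rw [Real.sqrt_eq_rpow, ← Real.rpow_mul ht, ← Real.rpow_add' ht] <;> norm_num

noncomputable def shotRisk (A B γ s : ℝ) : ℝ := √(s + γ) * (A + B / √s)

theorem hasDerivAt_shotRisk (A B : ℝ) {γ s : ℝ} (hs : 0 < s) (hsγ : 0 < s + γ) :
    HasDerivAt (shotRisk A B γ) ((A * (s * √s) - B * γ) / (2 * (s * √s) * √(s + γ))) s := by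
  have hsqrt : HasDerivAt (fun x => √(x + γ)) (1 / (2 * √(s + γ))) s := by
    simpa using ((hasDerivAt_id s).add_const γ).sqrt hsγ.ne'
  have hinv : HasDerivAt (fun x => A + B / √x) (B * (-(1 / (2 * √s)) / √s ^ 2)) s := by
    simpa only [div_eq_mul_inv, one_mul] using
      (((hasDerivAt_sqrt hs.ne').fun_inv (Real.sqrt_pos.mpr hs).ne').const_mul B).const_add A
  refine (hsqrt.fun_mul hinv).congr_deriv ?_
  have : 0 < √s := Real.sqrt_pos.mpr hs
  have : 0 < √(s + γ) := Real.sqrt_pos.mpr hsγ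
  field_simp
  rw [Real.sq_sqrt hs.le, Real.sq_sqrt hsγ.le]
  ring

theorem eqOn_shotRisk_div_penalizedRiskBound (c₁ c₂ c₃ N : ℝ) {γ : ℝ} (hγ : 0 ≤ γ) :
    EqOn (fun s => shotRisk (c₁ + c₃) c₂ γ s / √N) (penalizedRiskBound c₁ c₂ c₃ γ N) (Ioi 0) := by
  intro s (hs : 0 < s)
  have hsγ : 0 ≤ s + γ := add_nonneg hs.le hγ
  dsimp only [penalizedRiskBound, shotRisk]
  rw [Real.sqrt_div hsγ, Real.sqrt_div hsγ,
    Real.sqrt_mul' N hs.le]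
  ring

theorem shotRisk_strictAntiOn_strictMonoOn {A B γ : ℝ} (hA : 0 < A) (hB : 0 < B) (hγ : 0 < γ) :
    StrictAntiOn (shotRisk A B γ) (Ioc 0 ((B * γ / A) ^ ((2 : ℝ) / 3))) ∧
      StrictMonoOn (shotRisk A B γ) (Ici ((B * γ / A) ^ ((2 : ℝ) / 3))) := by
  set sstar := (B * γ / A) ^ ((2 : ℝ) / 3)
  have hstar : 0 < sstar := by positivity
  have hcube : sstar * √sstar = B * γ / A := rpow_two_div_three_mul_sqrt (by positivity)
  refine strictAntiOn_Ioc_strictMonoOn_Ici_of_hasDerivAt hstar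
    (fun x hx => hasDerivAt_shotRisk A B hx (by positivity)) (fun x hx => ?_) (fun x hx => ?_)
  · have hx0 : 0 < x := hx.1
    refine div_neg_of_neg_of_pos (sub_neg.mpr ?_) (by positivity)
    exact (lt_div_iff₀' hA).mp (hcube ▸ mul_sqrt_lt_mul_sqrt hx0.le hx.2)
  · have hx0 : 0 < x := hstar.trans hx
    refine div_pos (sub_pos.mpr ?_) (by positivity)
    exact (div_lt_iff₀' hA).mp (hcube ▸ mul_sqrt_lt_mul_sqrt hstar.le hx)

/-- optimal shot number under a parameter-switching penalty. For
`c₁, c₂, c₃, γ, N_tot > 0`, the function `g` attains a unique global minimum on `(0, ∞)`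
at `s* = (c₂ γ / (c₁ + c₃))^{2/3}`; moreover `g` is strictly decreasing on `(0, s*)` and
strictly increasing on `(s*, ∞)`. -/
theorem optimal_shot_number_with_penalty
    (c₁ c₂ c₃ γ Ntot : ℝ) (h₁ : 0 < c₁) (h₂ : 0 < c₂) (h₃ : 0 < c₃)
    (hγ : 0 < γ) (hN : 0 < Ntot)
    (sstar : ℝ) (hs : sstar = (c₂ * γ / (c₁ + c₃)) ^ ((2 : ℝ) / 3)) :
    (∀ s, 0 < s → penalizedRiskBound c₁ c₂ c₃ γ Ntot sstar
        ≤ penalizedRiskBound c₁ c₂ c₃ γ Ntot s) ∧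
    (∀ s, 0 < s → penalizedRiskBound c₁ c₂ c₃ γ Ntot s
        = penalizedRiskBound c₁ c₂ c₃ γ Ntot sstar → s = sstar) ∧
    StrictAntiOn (penalizedRiskBound c₁ c₂ c₃ γ Ntot) (Set.Ioo 0 sstar) ∧
    StrictMonoOn (penalizedRiskBound c₁ c₂ c₃ γ Ntot) (Set.Ioi sstar) := by
  have hstar : 0 < sstar := hs ▸ by positivity
  obtain ⟨hanti, hmono⟩ := shotRisk_strictAntiOn_strictMonoOn (add_pos h₁ h₃) h₂ hγ
  rw [← hs] at hanti hmono
  have hdiv := strictMono_div_right_of_pos (Real.sqrt_pos.mpr hN)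
  have heq := eqOn_shotRisk_div_penalizedRiskBound c₁ c₂ c₃ Ntot hγ.le
  have hanti' : StrictAntiOn (penalizedRiskBound c₁ c₂ c₃ γ Ntot) (Ioc 0 sstar) :=
    (hdiv.comp_strictAntiOn hanti).congr (heq.mono Ioc_subset_Ioi_self)
  have hmono' : StrictMonoOn (penalizedRiskBound c₁ c₂ c₃ γ Ntot) (Ici sstar) :=
    (hdiv.comp_strictMonoOn hmono).congr (heq.mono (Ici_subset_Ioi.mpr hstar))
  have hmin {s : ℝ} (hs : 0 < s) (hne : s ≠ sstar) :=
    lt_of_strictAntiOn_Ioc_of_strictMonoOn_Ici hanti' hmono' hs hne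
  refine ⟨fun s hs => ?_, fun s hs hval => ?_, hanti'.mono Ioo_subset_Ioc_self,
    hmono'.mono Ioi_subset_Ici_self⟩
  · rcases eq_or_ne s sstar with rfl | hne
    · exact le_rfl
    · exact (hmin hs hne).le
  · by_contra hne
    exact (hmin hs hne).ne' hval
end

section
/- Let c₁, c₂, c₃, N_tot > 0 and γ ≥ 0, and define g(s) = c₁ √((s + γ)/N_tot) + c₂ √((s + γ)/(N_tot · s)) + c₃ √((s + γ)/N_tot) for s ≥ 1. Then g(1) ≤ √(1 + γ) · g(s) for every s ≥ 1. In other words, always choosing a single measurement shot per data point (s = 1), regardless of the penalty γ, increases the risk bound by at most a multiplicative factor √(1 + γ) over its optimal value. -/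
/-- always choosing a single measurement shot per data point (`s = 1`),
regardless of the penalty `γ ≥ 0`, increases the risk bound by at most a multiplicative
factor `√(1 + γ)` over its value at any `s ≥ 1`:
`g(1) ≤ √(1 + γ) · g(s)` for every `s ≥ 1`. -/
theorem single_shot_near_optimal
    (c₁ c₂ c₃ Ntot γ : ℝ) (h₁ : 0 < c₁) (h₂ : 0 < c₂) (h₃ : 0 < c₃)
    (hN : 0 < Ntot) (hγ : 0 ≤ γ) :
    ∀ s, 1 ≤ s →
      penalizedRiskBound c₁ c₂ c₃ γ Ntot 1
        ≤ Real.sqrt (1 + γ) * penalizedRiskBound c₁ c₂ c₃ γ Ntot s := by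
  intro s hs
  have hs0 : 0 < s := lt_of_lt_of_le one_pos hs
  have h1γ : (0:ℝ) ≤ 1 + γ := by linarith
  have key1 : Real.sqrt ((1 + γ) / Ntot)
      ≤ Real.sqrt (1 + γ) * Real.sqrt ((s + γ) / Ntot) := by
    rw [← Real.sqrt_mul h1γ]
    apply Real.sqrt_le_sqrt
    rw [mul_div_assoc']
    gcongr
    nlinarith
  have key2 : Real.sqrt ((1 + γ) / Ntot)
      ≤ Real.sqrt (1 + γ) * Real.sqrt ((s + γ) / (Ntot * s)) := by
    rw [← Real.sqrt_mul h1γ]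
    apply Real.sqrt_le_sqrt
    rw [mul_div_assoc', div_le_div_iff₀ hN (by positivity)]
    nlinarith [mul_nonneg (mul_nonneg h1γ hγ) hN.le]
  unfold penalizedRiskBound
  simp only [mul_one]
  have hB1 : (0:ℝ) ≤ Real.sqrt ((s + γ) / Ntot) := Real.sqrt_nonneg _
  have hB2 : (0:ℝ) ≤ Real.sqrt ((s + γ) / (Ntot * s)) := Real.sqrt_nonneg _
  nlinarith [mul_le_mul_of_nonneg_left key1 h₁.le,
    mul_le_mul_of_nonneg_left key2 h₂.le,
    mul_le_mul_of_nonneg_left key1 h₃.le]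
end
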